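/- arXiv:1501.04808 — 2 statements merged into one kernel-verified Lean document; each statement's English description precedes it below -/
import Mathlib

section
/- For real-valued Schwartz functions f, g on ℝ, the distributional pairing ω₂(f,g) = −(1/π) lim_{ε→0⁺} ∫∫ f(u) g(u') / (u−u'−iε)² du du' equals 2 ∫₀^∞ k · \hat{f}(k) \overline{\hat{g}(k)} dk, where \hat{f}(k) = (1/√(2π)) ∫ f(u) e^{−iku} du. In particular ω₂(f,f) ≥ 0 for all real Schwartz f. -/
open Complex Filter MeasureTheory
open scoped SchwartzMap

noncomputable section

/-- The `ε`-regularized two-point function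
`ω₂^ε(f,g) = −(1/π) ∫∫ f(u) g(u') / (u−u'−iε)² du du'`. -/
def omega2Reg (f g : ℝ → ℝ) (ε : ℝ) : ℂ :=
  (-(1 / (Real.pi : ℂ))) *
    ∫ u : ℝ, ∫ u' : ℝ, ((f u : ℂ) * (g u' : ℂ)) / (((u : ℂ) - (u' : ℂ) - ε * Complex.I) ^ 2)

/-- The Fourier transform `f̂(k) = (2π)^{−1/2} ∫ f(u) e^{−iku} du`. -/
def hatF (f : ℝ → ℝ) (k : ℝ) : ℂ :=
  ((Real.sqrt (2 * Real.pi) : ℂ))⁻¹ * ∫ u : ℝ, (f u : ℂ) * Complex.exp (-(Complex.I * k * u))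

namespace Stmt13Aux

open Set
open scoped FourierTransform Real RealInnerProductSpace

/-- Coerce a real Schwartz function to a complex-valued one. -/
def toC (f : 𝓢(ℝ, ℝ)) : 𝓢(ℝ, ℂ) where
  toFun x := (f x : ℂ)
  smooth' := Complex.ofRealCLM.contDiff.comp f.smooth'
  decay' := by
    intro k n
    obtain ⟨C, hC⟩ := f.decay' k n
    refine ⟨C, fun x => ?_⟩
    have h : ‖iteratedFDeriv ℝ n (fun y : ℝ => ((f y : ℂ))) x‖
        = ‖iteratedFDeriv ℝ n f x‖ :=
      Complex.ofRealLI.norm_iteratedFDeriv_comp_left (𝕜 := ℝ) f.smooth'.contDiffAt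
        (i := n) (by exact_mod_cast le_top)
    calc ‖x‖ ^ k * ‖iteratedFDeriv ℝ n (fun y : ℝ => ((f y : ℂ))) x‖
        = ‖x‖ ^ k * ‖iteratedFDeriv ℝ n f x‖ := by rw [h]
      _ ≤ C := hC x

@[simp] lemma toC_apply (f : 𝓢(ℝ, ℝ)) (x : ℝ) : toC f x = (f x : ℂ) := rfl

lemma tendsto_mul_exp (r : ℝ) (hr : 0 < r) :
    Tendsto (fun k : ℝ => k * Real.exp (-r * k)) atTop (nhds 0) := by
  simpa [Real.rpow_one] using tendsto_rpow_mul_exp_neg_mul_atTop_nhds_zero 1 r hr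

lemma integrableOn_mul_exp {r : ℝ} (hr : 0 < r) :
    IntegrableOn (fun k : ℝ => k * Real.exp (-r * k)) (Ioi 0) := by
  apply integrable_of_isBigO_exp_neg (show (0:ℝ) < r/2 by linarith)
    ((continuous_id.mul (Real.continuous_exp.comp (by fun_prop))).continuousOn)
  have h := tendsto_mul_exp (r/2) (by linarith)
  rw [Asymptotics.isBigO_iff]
  refine ⟨1, ?_⟩
  filter_upwards [h.eventually (eventually_le_nhds (by norm_num : (0:ℝ) < 1)),
    eventually_ge_atTop (0:ℝ)] with x hx hx0
  have hsplit : x * Real.exp (-r * x)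
      = (x * Real.exp (-(r/2) * x)) * Real.exp (-(r/2) * x) := by
    rw [mul_assoc, ← Real.exp_add]; ring_nf
  have h2 : 0 ≤ x * Real.exp (-(r/2) * x) := mul_nonneg hx0 (Real.exp_pos _).le
  show |x * Real.exp (-r * x)| ≤ 1 * |Real.exp (-(r/2) * x)|
  rw [hsplit,
    _root_.abs_of_nonneg (mul_nonneg h2 (Real.exp_pos _).le),
    _root_.abs_of_nonneg (Real.exp_pos _).le, one_mul]
  exact mul_le_of_le_one_left (Real.exp_pos _).le hx

lemma abs_mul_exp_integrable {r : ℝ} (hr : 0 < r) :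
    Integrable (fun k : ℝ => |k| * Real.exp (-r * k)) (volume.restrict (Ioi 0)) :=
  (integrableOn_mul_exp hr).congr_fun
    (fun k hk => by rw [_root_.abs_of_nonneg (le_of_lt hk)]) measurableSet_Ioi

lemma norm_cexp_neg_mul (c : ℂ) (k : ℝ) :
    ‖Complex.exp (-(c * k))‖ = Real.exp (-c.re * k) := by
  rw [Complex.norm_exp]
  congr 1
  simp [Complex.mul_re]

lemma norm_cexp_neg_I_mul (a b : ℝ) : ‖Complex.exp (-(Complex.I * a * b))‖ = 1 := by
  rw [Complex.norm_exp]
  have : (-(Complex.I * a * b)).re = 0 := by simp [Complex.mul_re]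
  rw [this, Real.exp_zero]

lemma norm_cexp_I_mul (a b : ℝ) : ‖Complex.exp (Complex.I * a * b)‖ = 1 := by
  rw [Complex.norm_exp]
  have : (Complex.I * a * b).re = 0 := by simp [Complex.mul_re]
  rw [this, Real.exp_zero]

lemma norm_cexp_neg_ofReal_mul (a k : ℝ) :
    ‖Complex.exp (-((a:ℂ) * k))‖ = Real.exp (-a * k) := by
  rw [norm_cexp_neg_mul]
  simp

lemma integrableOn_id_cexp {c : ℂ} (hc : 0 < c.re) :
    IntegrableOn (fun k : ℝ => (k:ℂ) * Complex.exp (-(c * k))) (Ioi 0) := by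
  refine Integrable.mono' (integrableOn_mul_exp hc) ?_ ?_
  · exact Continuous.aestronglyMeasurable (by fun_prop)
  · filter_upwards [ae_restrict_mem measurableSet_Ioi] with k hk
    rw [norm_mul, norm_cexp_neg_mul, Complex.norm_real, Real.norm_eq_abs,
      _root_.abs_of_nonneg (le_of_lt hk)]

lemma integral_id_cexp {c : ℂ} (hc : 0 < c.re) :
    ∫ k in Ioi (0:ℝ), (k:ℂ) * Complex.exp (-(c * k)) = (c^2)⁻¹ := by
  have hcne : c ≠ 0 := fun h => by simp [h] at hc
  set F : ℝ → ℂ := fun k => -(((k:ℂ)/c + 1/c^2) * Complex.exp (-(c * k))) with hF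
  have hderiv : ∀ x ∈ Ici (0:ℝ), HasDerivAt F ((x:ℂ) * Complex.exp (-(c * x))) x := by
    intro x _
    have hid : HasDerivAt (fun y : ℝ => (y:ℂ)) 1 x := by
      simpa using (hasDerivAt_id x).ofReal_comp
    have hexp : HasDerivAt (fun y : ℝ => Complex.exp (-(c * y)))
        (Complex.exp (-(c * x)) * (-(c * 1))) x := ((hid.const_mul c).neg).cexp
    have h1 : HasDerivAt (fun y : ℝ => ((y:ℂ)/c + 1/c^2)) (1/c) x := by
      exact (hid.div_const c).add_const (1/c^2)
    have h2 := (h1.mul hexp).neg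
    convert h2 using 1
    · rfl
    · rfl
    field_simp
    ring
  have hexp0 : Tendsto (fun x : ℝ => Real.exp (-c.re * x)) atTop (nhds 0) :=
    Real.tendsto_exp_atBot.comp (tendsto_id.const_mul_atTop_of_neg (by linarith))
  have htop : Tendsto F atTop (nhds 0) := by
    have hb : ∀ᶠ x : ℝ in atTop, ‖F x‖ ≤
        ‖1/c‖ * (x * Real.exp (-c.re * x)) + ‖1/c^2‖ * Real.exp (-c.re * x) := by
      filter_upwards [eventually_ge_atTop (0:ℝ)] with x hx0
      have h1 : ‖F x‖ = ‖(x:ℂ)/c + 1/c^2‖ * Real.exp (-c.re * x) := by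
        rw [hF]
        simp only [norm_neg, norm_mul, norm_cexp_neg_mul]
      have h2 : ‖(x:ℂ)/c + 1/c^2‖ ≤ x * ‖1/c‖ + ‖1/c^2‖ := by
        refine (norm_add_le _ _).trans ?_
        gcongr
        rw [div_eq_mul_one_div, norm_mul, Complex.norm_real, Real.norm_eq_abs,
          _root_.abs_of_nonneg hx0]
      rw [h1]
      calc ‖(x:ℂ)/c + 1/c^2‖ * Real.exp (-c.re * x)
          ≤ (x * ‖1/c‖ + ‖1/c^2‖) * Real.exp (-c.re * x) := by
            exact mul_le_mul_of_nonneg_right h2 (Real.exp_pos _).le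
        _ = ‖1/c‖ * (x * Real.exp (-c.re * x)) + ‖1/c^2‖ * Real.exp (-c.re * x) := by ring
    have hA := (tendsto_mul_exp c.re hc).const_mul ‖1/c‖
    have hB := hexp0.const_mul ‖1/c^2‖
    exact squeeze_zero_norm' hb (by simpa using hA.add hB)
  have key := integral_Ioi_of_hasDerivAt_of_tendsto' hderiv (integrableOn_id_cexp hc) htop
  rw [key, hF]
  simp only [Complex.ofReal_zero, zero_div, mul_zero, neg_zero, Complex.exp_zero, mul_one,
    zero_add, zero_sub, neg_neg]
  rw [one_div]

lemma phi_eq_fourier (f : ℝ → ℝ) (k : ℝ) :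
    (∫ u : ℝ, (f u : ℂ) * Complex.exp (-(Complex.I * k * u)))
      = 𝓕 (fun u : ℝ => (f u : ℂ)) (k / (2 * Real.pi)) := by
  rw [Real.fourier_eq']
  congr 1
  ext u
  rw [smul_eq_mul, mul_comm]
  congr 2
  have hinner : ⟪u, k / (2*Real.pi)⟫ = u * (k/(2*Real.pi)) := by simp [RCLike.inner_apply]; ring
  rw [hinner]
  have hπ : (2*Real.pi) ≠ 0 := by positivity
  have : -2 * Real.pi * (u * (k / (2*Real.pi))) = -(u*k) := by field_simp
  rw [this]
  push_cast
  ring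

/-- the Fourier transform of `toC f` as a Schwartz function -/
def FT (f : 𝓢(ℝ, ℝ)) : 𝓢(ℝ, ℂ) := SchwartzMap.fourierTransformCLM ℂ (toC f)

lemma hatF_eq (f : 𝓢(ℝ, ℝ)) (k : ℝ) :
    hatF f k = ((Real.sqrt (2 * Real.pi) : ℂ))⁻¹ * FT f (k / (2 * Real.pi)) := by
  rw [hatF, phi_eq_fourier]
  congr 1

lemma hatF_continuous (f : 𝓢(ℝ, ℝ)) : Continuous (hatF f) := by
  have : (hatF f) = fun k => ((Real.sqrt (2 * Real.pi) : ℂ))⁻¹ * FT f (k / (2 * Real.pi)) :=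
    funext (hatF_eq f)
  rw [this]
  exact continuous_const.mul (((FT f).continuous).comp (continuous_id.div_const _))

lemma hatF_le (f : 𝓢(ℝ, ℝ)) (k : ℝ) :
    ‖hatF f k‖ ≤ (Real.sqrt (2 * Real.pi))⁻¹ * SchwartzMap.seminorm ℝ 0 0 (FT f) := by
  rw [hatF_eq, norm_mul]
  gcongr
  · rw [norm_inv, Complex.norm_real, Real.norm_eq_abs, _root_.abs_of_nonneg (Real.sqrt_nonneg _)]
  · exact SchwartzMap.norm_le_seminorm ℝ (FT f) _

lemma hatF_norm_eq (f : 𝓢(ℝ, ℝ)) (k : ℝ) :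
    ‖hatF f k‖ = (Real.sqrt (2 * Real.pi))⁻¹ * ‖FT f (k / (2 * Real.pi))‖ := by
  rw [hatF_eq, norm_mul]
  congr 1
  rw [norm_inv, Complex.norm_real, Real.norm_eq_abs, _root_.abs_of_nonneg (Real.sqrt_nonneg _)]

lemma integrable_T (f g : 𝓢(ℝ, ℝ)) :
    Integrable (fun k : ℝ => (k:ℂ) * hatF f k * (starRingEnd ℂ) (hatF g k))
      (volume.restrict (Ioi 0)) := by
  set s := Real.sqrt (2 * Real.pi) with hs
  have hs0 : 0 < s := Real.sqrt_pos.mpr (by positivity)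
  set Mg := SchwartzMap.seminorm ℝ 0 0 (FT g) with hMg
  have hφ1 : Integrable (fun y : ℝ => ‖y‖ * ‖FT f y‖) := by
    simpa using (FT f).integrable_pow_mul volume 1
  have h2π : (2 * Real.pi)⁻¹ ≠ 0 := by positivity
  have hψ : Integrable (fun k : ℝ => ‖k * (2*Real.pi)⁻¹‖ * ‖FT f (k * (2*Real.pi)⁻¹)‖) :=
    hφ1.comp_mul_right' h2π
  have hC : 0 ≤ 2 * Real.pi * (s⁻¹ * (s⁻¹ * Mg)) := by
    have : (0:ℝ) ≤ Mg := apply_nonneg _ _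
    positivity
  refine Integrable.mono'
    ((hψ.const_mul (2 * Real.pi * (s⁻¹ * (s⁻¹ * Mg)))).integrableOn) ?_ ?_
  · refine Continuous.aestronglyMeasurable ?_
    exact ((Complex.continuous_ofReal.mul (hatF_continuous f))).mul
      (continuous_star.comp (hatF_continuous g))
  · refine Eventually.of_forall fun k => ?_
    have hnorm : ‖(k:ℂ) * hatF f k * (starRingEnd ℂ) (hatF g k)‖
        = |k| * ‖hatF f k‖ * ‖hatF g k‖ := by
      simp [norm_mul]
    rw [hnorm, hatF_norm_eq]
    have h1 : |k| * (s⁻¹ * ‖FT f (k / (2*Real.pi))‖) * ‖hatF g k‖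
        ≤ |k| * (s⁻¹ * ‖FT f (k / (2*Real.pi))‖) * (s⁻¹ * Mg) :=
      mul_le_mul_of_nonneg_left (hatF_le g k) (by positivity)
    refine h1.trans (le_of_eq ?_)
    have habs : ‖k * (2*Real.pi)⁻¹‖ = |k| * (2*Real.pi)⁻¹ := by
      rw [Real.norm_eq_abs, abs_mul, _root_.abs_of_nonneg (by positivity : (0:ℝ) ≤ (2*Real.pi)⁻¹)]
    have hdiv : k / (2*Real.pi) = k * (2*Real.pi)⁻¹ := div_eq_mul_inv _ _
    rw [hdiv, habs]
    have hπ : (2*Real.pi) ≠ 0 := by positivity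
    field_simp

lemma phi_eq_hatF (f : 𝓢(ℝ, ℝ)) (k : ℝ) :
    (∫ u : ℝ, (f u : ℂ) * Complex.exp (-(Complex.I * k * u)))
      = ((Real.sqrt (2 * Real.pi) : ℂ)) * hatF f k := by
  have hs0 : (0:ℝ) < Real.sqrt (2 * Real.pi) := Real.sqrt_pos.mpr (by positivity)
  have hsne : ((Real.sqrt (2 * Real.pi) : ℂ)) ≠ 0 := by
    simpa using ne_of_gt hs0
  rw [hatF, ← mul_assoc, mul_inv_cancel₀ hsne, one_mul]

lemma psi_eq_hatF (g : 𝓢(ℝ, ℝ)) (k : ℝ) :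
    (∫ u' : ℝ, (g u' : ℂ) * Complex.exp (Complex.I * k * u'))
      = ((Real.sqrt (2 * Real.pi) : ℂ)) * (starRingEnd ℂ) (hatF g k) := by
  have h1 : (∫ u' : ℝ, (g u' : ℂ) * Complex.exp (Complex.I * k * u'))
      = (starRingEnd ℂ) (∫ u' : ℝ, (g u' : ℂ) * Complex.exp (-(Complex.I * k * u'))) := by
    rw [← integral_conj]
    congr 1
    ext u'
    rw [map_mul, Complex.conj_ofReal, ← Complex.exp_conj]
    congr 1
    simp only [map_neg, map_mul, Complex.conj_I, Complex.conj_ofReal]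
    ring
  rw [h1, phi_eq_hatF, map_mul, Complex.conj_ofReal]

lemma hatF_bound (g : 𝓢(ℝ, ℝ)) : ∃ M : ℝ, 0 ≤ M ∧ ∀ k, ‖hatF g k‖ ≤ M :=
  ⟨(Real.sqrt (2 * Real.pi))⁻¹ * SchwartzMap.seminorm ℝ 0 0 (FT g),
    mul_nonneg (by positivity) (apply_nonneg _ _), fun k => hatF_le g k⟩

lemma main_id (f g : 𝓢(ℝ, ℝ)) {ε : ℝ} (hε : 0 < ε) :
    omega2Reg f g ε = 2 * ∫ k in Ioi (0:ℝ),
      Complex.exp (-((ε:ℂ) * k)) * ((k:ℂ) * hatF f k * (starRingEnd ℂ) (hatF g k)) := by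
  obtain ⟨Mg, hMg0, hMg⟩ := hatF_bound g
  set s : ℝ := Real.sqrt (2 * Real.pi) with hs
  have hs0 : (0:ℝ) < s := Real.sqrt_pos.mpr (by positivity)
  set Ψ : ℝ → ℂ := fun k => ∫ u' : ℝ, (g u' : ℂ) * Complex.exp (Complex.I * k * u') with hΨ
  set Φ : ℝ → ℂ := fun k => ∫ u : ℝ, (f u : ℂ) * Complex.exp (-(Complex.I * k * u)) with hΦ
  have hΨ_eq : ∀ k, Ψ k = (s:ℂ) * (starRingEnd ℂ) (hatF g k) := fun k => psi_eq_hatF g k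
  have hΦ_eq : ∀ k, Φ k = (s:ℂ) * hatF f k := fun k => phi_eq_hatF f k
  have hΨc : Continuous Ψ := by
    have : Ψ = fun k => (s:ℂ) * (starRingEnd ℂ) (hatF g k) := funext hΨ_eq
    rw [this]
    exact continuous_const.mul (continuous_star.comp (hatF_continuous g))
  have hΨle : ∀ k, ‖Ψ k‖ ≤ s * Mg := by
    intro k
    rw [hΨ_eq k, norm_mul, Complex.norm_real, Real.norm_eq_abs,
      _root_.abs_of_nonneg hs0.le, RCLike.norm_conj]
    exact mul_le_mul_of_nonneg_left (hMg k) hs0.le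
  -- the triple integrand
  set W : ℝ → ℝ → ℝ → ℂ := fun u u' k =>
    (f u : ℂ) * (k:ℂ) * Complex.exp (-((ε:ℂ) * k)) * Complex.exp (-(Complex.I * k * u))
      * ((g u' : ℂ) * Complex.exp (Complex.I * k * u')) with hW
  have hcre : ∀ u u' : ℝ, (0:ℝ) < ((ε:ℂ) + Complex.I * ((u:ℂ) - u')).re := by
    intro u u'
    have : ((ε:ℂ) + Complex.I * ((u:ℂ) - u')).re = ε := by
      simp [Complex.add_re, Complex.mul_re]
    rw [this]; exact hε
  -- kernel identity
  have hker : ∀ u u' : ℝ, ((f u : ℂ) * (g u' : ℂ)) / (((u:ℂ) - u' - ε * Complex.I)^2)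
      = -∫ k in Ioi (0:ℝ), W u u' k := by
    intro u u'
    set c : ℂ := (ε:ℂ) + Complex.I * ((u:ℂ) - u') with hc
    have hci : c = Complex.I * ((u:ℂ) - u' - ε * Complex.I) := by
      rw [hc]; linear_combination (ε:ℂ) * Complex.I_sq
    have hz : (((u:ℂ) - u' - ε * Complex.I)^2) = -(c^2) := by
      rw [hci]
      linear_combination (((u:ℂ) - u' - ε * Complex.I)^2) * Complex.I_sq
    have hint := integral_id_cexp (hcre u u')
    rw [← hc] at hint
    calc ((f u : ℂ) * (g u' : ℂ)) / (((u:ℂ) - u' - ε * Complex.I)^2)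
        = (f u : ℂ) * (g u' : ℂ) * ((((u:ℂ) - u' - ε * Complex.I)^2)⁻¹) :=
          div_eq_mul_inv _ _
      _ = -((f u : ℂ) * (g u' : ℂ) * (c^2)⁻¹) := by rw [hz, inv_neg]; ring
      _ = -((f u : ℂ) * (g u' : ℂ) * ∫ k in Ioi (0:ℝ), (k:ℂ) * Complex.exp (-(c * k))) := by
          rw [hint]
      _ = -(∫ k in Ioi (0:ℝ), (f u : ℂ) * (g u' : ℂ) * ((k:ℂ) * Complex.exp (-(c * k)))) := by
          rw [integral_const_mul]
      _ = -∫ k in Ioi (0:ℝ), W u u' k := by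
          refine neg_inj.mpr (integral_congr_ae (Eventually.of_forall fun k => ?_))
          have hexp : Complex.exp (-(c * k)) = Complex.exp (-((ε:ℂ) * k))
              * (Complex.exp (-(Complex.I * k * u)) * Complex.exp (Complex.I * k * u')) := by
            rw [← Complex.exp_add, ← Complex.exp_add]
            congr 1
            rw [hc]
            ring
          show (f u : ℂ) * (g u' : ℂ) * ((k:ℂ) * Complex.exp (-(c * k)))
            = (f u : ℂ) * (k:ℂ) * Complex.exp (-((ε:ℂ) * k))
              * Complex.exp (-(Complex.I * k * u))
              * ((g u' : ℂ) * Complex.exp (Complex.I * k * u'))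
          rw [hexp]
          ring
  -- integrability of W for fixed u, over (u', k)
  have hWint : ∀ u : ℝ, Integrable (Function.uncurry fun u' k => W u u' k)
      ((volume : Measure ℝ).prod (volume.restrict (Ioi 0))) := by
    intro u
    refine Integrable.mono'
      (((g.integrable.abs).mul_prod (abs_mul_exp_integrable hε)).const_mul |f u|) ?_ ?_
    · refine Continuous.aestronglyMeasurable ?_
      have hgc : Continuous fun p : ℝ × ℝ => (g p.1 : ℂ) :=
        Complex.continuous_ofReal.comp (g.continuous.comp continuous_fst)
      have hk : Continuous fun p : ℝ × ℝ => ((p.2 : ℝ) : ℂ) :=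
        Complex.continuous_ofReal.comp continuous_snd
      have he1 : Continuous fun p : ℝ × ℝ => Complex.exp (-((ε:ℂ) * p.2)) :=
        Complex.continuous_exp.comp ((continuous_const.mul hk).neg)
      have he2 : Continuous fun p : ℝ × ℝ => Complex.exp (-(Complex.I * p.2 * u)) :=
        Complex.continuous_exp.comp (((continuous_const.mul hk).mul continuous_const).neg)
      have he3 : Continuous fun p : ℝ × ℝ => Complex.exp (Complex.I * p.2 * p.1) :=
        Complex.continuous_exp.comp ((continuous_const.mul hk).mul
          (Complex.continuous_ofReal.comp continuous_fst))
      exact ((((continuous_const.mul hk).mul he1).mul he2).mul (hgc.mul he3))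
    · refine Eventually.of_forall fun p => ?_
      show ‖W u p.1 p.2‖ ≤ |f u| * (|g p.1| * (|p.2| * Real.exp (-ε * p.2)))
      have : ‖W u p.1 p.2‖ = |f u| * |p.2| * Real.exp (-ε * p.2) * (|g p.1|) := by
        rw [hW]
        simp only [norm_mul, Complex.norm_real, Real.norm_eq_abs,
          norm_cexp_neg_ofReal_mul, norm_cexp_neg_I_mul, norm_cexp_I_mul]
        ring
      rw [this]
      exact le_of_eq (by ring)
  -- step 1 : the inner integral
  have step1 : ∀ u : ℝ, (∫ u' : ℝ, ((f u : ℂ) * (g u' : ℂ))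
        / (((u:ℂ) - u' - ε * Complex.I)^2))
      = -∫ k in Ioi (0:ℝ),
          ((f u : ℂ) * (k:ℂ) * Complex.exp (-((ε:ℂ) * k))
            * Complex.exp (-(Complex.I * k * u))) * Ψ k := by
    intro u
    have e1 : (fun u' : ℝ => ((f u : ℂ) * (g u' : ℂ)) / (((u:ℂ) - u' - ε * Complex.I)^2))
        = fun u' : ℝ => -∫ k in Ioi (0:ℝ), W u u' k := funext (hker u)
    rw [e1, integral_neg, integral_integral_swap (hWint u)]
    congr 1
    refine integral_congr_ae (Eventually.of_forall fun k => ?_)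
    show (∫ u' : ℝ, W u u' k)
      = ((f u : ℂ) * (k:ℂ) * Complex.exp (-((ε:ℂ) * k))
          * Complex.exp (-(Complex.I * k * u))) * Ψ k
    exact integral_const_mul _ _
  -- step 2 : swap u and k
  set Q : ℝ → ℝ → ℂ := fun u k =>
    ((f u : ℂ) * (k:ℂ) * Complex.exp (-((ε:ℂ) * k))
      * Complex.exp (-(Complex.I * k * u))) * Ψ k with hQ
  have hQint : Integrable (Function.uncurry Q)
      ((volume : Measure ℝ).prod (volume.restrict (Ioi 0))) := by
    refine Integrable.mono'
      ((f.integrable.abs).mul_prod ((abs_mul_exp_integrable hε).mul_const (s * Mg))) ?_ ?_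
    · refine Continuous.aestronglyMeasurable ?_
      have hfc : Continuous fun p : ℝ × ℝ => (f p.1 : ℂ) :=
        Complex.continuous_ofReal.comp (f.continuous.comp continuous_fst)
      have hk : Continuous fun p : ℝ × ℝ => ((p.2 : ℝ) : ℂ) :=
        Complex.continuous_ofReal.comp continuous_snd
      have he1 : Continuous fun p : ℝ × ℝ => Complex.exp (-((ε:ℂ) * p.2)) :=
        Complex.continuous_exp.comp ((continuous_const.mul hk).neg)
      have he2 : Continuous fun p : ℝ × ℝ => Complex.exp (-(Complex.I * p.2 * p.1)) :=
        Complex.continuous_exp.comp (((continuous_const.mul hk).mul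
          (Complex.continuous_ofReal.comp continuous_fst)).neg)
      exact (((hfc.mul hk).mul he1).mul he2).mul (hΨc.comp continuous_snd)
    · refine Eventually.of_forall fun p => ?_
      show ‖Q p.1 p.2‖ ≤ |f p.1| * (|p.2| * Real.exp (-ε * p.2) * (s * Mg))
      have hnorm : ‖Q p.1 p.2‖
          = |f p.1| * |p.2| * Real.exp (-ε * p.2) * ‖Ψ p.2‖ := by
        rw [hQ]
        simp only [norm_mul, Complex.norm_real, Real.norm_eq_abs,
          norm_cexp_neg_ofReal_mul, norm_cexp_neg_I_mul]
        ring
      rw [hnorm]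
      have h1 : |f p.1| * |p.2| * Real.exp (-ε * p.2) * ‖Ψ p.2‖
          ≤ |f p.1| * |p.2| * Real.exp (-ε * p.2) * (s * Mg) :=
        mul_le_mul_of_nonneg_left (hΨle p.2) (by positivity)
      exact h1.trans (le_of_eq (by ring))
  -- assemble
  have hdouble : (∫ u : ℝ, ∫ u' : ℝ, ((f u : ℂ) * (g u' : ℂ))
        / (((u:ℂ) - u' - ε * Complex.I)^2))
      = -∫ k in Ioi (0:ℝ), ((k:ℂ) * Complex.exp (-((ε:ℂ) * k)) * Ψ k) * Φ k := by
    have e3 : (fun u : ℝ => ∫ u' : ℝ, ((f u : ℂ) * (g u' : ℂ))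
          / (((u:ℂ) - u' - ε * Complex.I)^2))
        = fun u : ℝ => -∫ k in Ioi (0:ℝ), Q u k := funext step1
    rw [e3, integral_neg, integral_integral_swap hQint]
    congr 1
    refine integral_congr_ae (Eventually.of_forall fun k => ?_)
    show (∫ u : ℝ, Q u k) = ((k:ℂ) * Complex.exp (-((ε:ℂ) * k)) * Ψ k) * Φ k
    have e4 : (fun u : ℝ => Q u k)
        = fun u : ℝ => ((k:ℂ) * Complex.exp (-((ε:ℂ) * k)) * Ψ k)
            * ((f u : ℂ) * Complex.exp (-(Complex.I * k * u))) := by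
      funext u
      rw [hQ]
      ring
    rw [e4]
    exact integral_const_mul _ _
  -- final rewriting
  rw [omega2Reg, hdouble]
  have hss : (s:ℂ) * (s:ℂ) = ((2 * Real.pi : ℝ) : ℂ) := by
    rw [← Complex.ofReal_mul, hs, Real.mul_self_sqrt (by positivity)]
  have e5 : (fun k : ℝ => ((k:ℂ) * Complex.exp (-((ε:ℂ) * k)) * Ψ k) * Φ k)
      = fun k : ℝ => ((2 * Real.pi : ℝ) : ℂ) * (Complex.exp (-((ε:ℂ) * k))
          * ((k:ℂ) * hatF f k * (starRingEnd ℂ) (hatF g k))) := by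
    funext k
    rw [hΨ_eq k, hΦ_eq k, ← hss]
    ring
  rw [e5, integral_const_mul]
  have hπ : (Real.pi : ℂ) ≠ 0 := by
    simpa using Real.pi_ne_zero
  set I := ∫ k in Ioi (0:ℝ), Complex.exp (-((ε:ℂ) * k)) * ((k:ℂ) * hatF f k * (starRingEnd ℂ) (hatF g k)) with hI
  field_simp
  push_cast
  ring

end Stmt13Aux

open Stmt13Aux Set in
/-- for real Schwartz functions `f, g`,
`ω₂(f,g) = lim_{ε→0⁺} −(1/π) ∫∫ f(u)g(u')/(u−u'−iε)² = 2 ∫₀^∞ k f̂(k) conj(ĝ(k)) dk`;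
in particular `ω₂(f,f) ≥ 0`. -/
theorem stmt_13 (f g : 𝓢(ℝ, ℝ)) :
    Tendsto (fun ε : ℝ => omega2Reg f g ε) (nhdsWithin 0 (Set.Ioi 0))
      (nhds (2 * ∫ k in Set.Ioi (0 : ℝ), (k : ℂ) * hatF f k * (starRingEnd ℂ) (hatF g k))) ∧
    0 ≤ (2 * ∫ k in Set.Ioi (0 : ℝ), (k : ℂ) * hatF f k * (starRingEnd ℂ) (hatF f k)).re := by
  constructor
  · set T : ℝ → ℂ := fun k => (k:ℂ) * hatF f k * (starRingEnd ℂ) (hatF g k) with hT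
    have hTi : Integrable T (volume.restrict (Ioi 0)) := integrable_T f g
    have hTc : Continuous T :=
      (Complex.continuous_ofReal.mul (hatF_continuous f)).mul
        (continuous_star.comp (hatF_continuous g))
    have htend : Tendsto (fun ε : ℝ => ∫ k in Ioi (0:ℝ),
        Complex.exp (-((ε:ℂ) * k)) * T k) (nhdsWithin 0 (Set.Ioi 0))
        (nhds (∫ k in Ioi (0:ℝ), T k)) := by
      refine tendsto_integral_filter_of_dominated_convergence (fun k => ‖T k‖) ?_ ?_ hTi.norm ?_
      · refine Eventually.of_forall fun ε => Continuous.aestronglyMeasurable ?_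
        exact (Complex.continuous_exp.comp
          ((continuous_const.mul Complex.continuous_ofReal).neg)).mul hTc
      · filter_upwards [self_mem_nhdsWithin] with ε (hε : ε ∈ Set.Ioi (0:ℝ))
        filter_upwards [ae_restrict_mem measurableSet_Ioi] with k hk
        rw [norm_mul, norm_cexp_neg_ofReal_mul]
        have h1 : Real.exp (-ε * k) ≤ 1 := by
          rw [Real.exp_le_one_iff]
          have : (0:ℝ) < ε * k := mul_pos hε hk
          linarith
        exact mul_le_of_le_one_left (norm_nonneg _) h1
      · refine Eventually.of_forall fun k => ?_
        have hc : Continuous fun ε : ℝ => Complex.exp (-((ε:ℂ) * k)) * T k :=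
          (Complex.continuous_exp.comp
            ((Complex.continuous_ofReal.mul continuous_const).neg)).mul continuous_const
        have h3 : Tendsto (fun ε : ℝ => Complex.exp (-((ε:ℂ) * k)) * T k)
            (nhdsWithin 0 (Set.Ioi 0)) (nhds (Complex.exp (-(((0:ℝ):ℂ) * k)) * T k)) :=
          (hc.tendsto 0).mono_left nhdsWithin_le_nhds
        simpa using h3
    have h2 := htend.const_mul (2:ℂ)
    refine h2.congr' ?_
    filter_upwards [self_mem_nhdsWithin] with ε (hε : ε ∈ Set.Ioi (0:ℝ))
    exact (main_id f g hε).symm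
  · have hTi := integrable_T f f
    have h1 : (∫ k in Ioi (0:ℝ), (k:ℂ) * hatF f k * (starRingEnd ℂ) (hatF f k)).re
        = ∫ k in Ioi (0:ℝ), ((k:ℂ) * hatF f k * (starRingEnd ℂ) (hatF f k)).re := by
      rw [← RCLike.re_eq_complex_re, ← integral_re hTi]
    have h2 : (0:ℝ) ≤ ∫ k in Ioi (0:ℝ), ((k:ℂ) * hatF f k * (starRingEnd ℂ) (hatF f k)).re := by
      refine setIntegral_nonneg measurableSet_Ioi fun k hk => ?_
      have : (k:ℂ) * hatF f k * (starRingEnd ℂ) (hatF f k)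
          = (k:ℂ) * ((Complex.normSq (hatF f k) : ℝ) : ℂ) := by
        rw [mul_assoc, Complex.mul_conj]
      rw [this, ← Complex.ofReal_mul, Complex.ofReal_re]
      exact mul_nonneg (le_of_lt hk) (Complex.normSq_nonneg _)
    have : (2 * ∫ k in Ioi (0:ℝ), (k:ℂ) * hatF f k * (starRingEnd ℂ) (hatF f k)).re
        = 2 * (∫ k in Ioi (0:ℝ), (k:ℂ) * hatF f k * (starRingEnd ℂ) (hatF f k)).re := by
      simp [Complex.mul_re]
    rw [this, h1]
    linarith
end
end

section
/- The antisymmetric part of the boundary two-point function reproduces the symplectic form: for real Schwartz functions f, g on ℝ, ω₂(f,g) − ω₂(g,f) = i·σ(f,g), where ω₂(f,g) = −(1/π) lim_{ε→0⁺} ∫∫ f(u)g(u')/(u−u'−iε)² du du' and σ(f,g) = ∫ (f g' − g f') du. -/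
open Complex Filter MeasureTheory
open scoped SchwartzMap Topology

noncomputable section

/-- The symplectic form `σ(f,g) = ∫ (f g' − g f') du` on the real line. -/
def sigmaLine (f g : ℝ → ℝ) : ℝ := ∫ u : ℝ, (f u * deriv g u - g u * deriv f u)

namespace Stmt14

/-! ### Basic facts about Schwartz functions -/

lemma s_tendsto_atTop (f : 𝓢(ℝ, ℝ)) : Tendsto f atTop (𝓝 0) :=
  (zero_at_infty f).mono_left (by rw [cocompact_eq_atBot_atTop]; exact le_sup_right)

lemma s_tendsto_atBot (f : 𝓢(ℝ, ℝ)) : Tendsto f atBot (𝓝 0) :=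
  (zero_at_infty f).mono_left (by rw [cocompact_eq_atBot_atTop]; exact le_sup_left)

/-- A uniform bound for a Schwartz function. -/
def bnd (f : 𝓢(ℝ, ℝ)) : ℝ := SchwartzMap.seminorm ℝ 0 0 f

lemma bnd_nonneg (f : 𝓢(ℝ, ℝ)) : 0 ≤ bnd f := apply_nonneg _ _

lemma abs_le_bnd (f : 𝓢(ℝ, ℝ)) (x : ℝ) : |f x| ≤ bnd f := by
  simpa [bnd, Real.norm_eq_abs] using SchwartzMap.norm_le_seminorm ℝ f x

lemma hasDerivAt_schwartz (f : 𝓢(ℝ, ℝ)) (x : ℝ) : HasDerivAt f (deriv f x) x :=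
  (f.differentiable x).hasDerivAt

lemma deriv_eq (g : 𝓢(ℝ, ℝ)) :
    (SchwartzMap.derivCLM ℝ ℝ g : ℝ → ℝ) = fun x => deriv g x := by
  funext x; exact SchwartzMap.derivCLM_apply ℝ g x

lemma deriv_integrable (g : 𝓢(ℝ, ℝ)) : Integrable (fun y => deriv (g : ℝ → ℝ) y) := by
  have := (SchwartzMap.derivCLM ℝ ℝ g).integrable (μ := volume)
  rwa [deriv_eq] at this

lemma deriv_continuous (g : 𝓢(ℝ, ℝ)) : Continuous (fun y => deriv (g : ℝ → ℝ) y) := by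
  have := (SchwartzMap.derivCLM ℝ ℝ g).continuous
  rwa [deriv_eq] at this

lemma deriv_abs_le (g : 𝓢(ℝ, ℝ)) (x : ℝ) :
    |deriv (g : ℝ → ℝ) x| ≤ bnd (SchwartzMap.derivCLM ℝ ℝ g) := by
  have := abs_le_bnd (SchwartzMap.derivCLM ℝ ℝ g) x
  rwa [SchwartzMap.derivCLM_apply] at this

/-! ### The complex kernel -/

lemma denom_ne_zero {ε : ℝ} (hε : ε ≠ 0) (u u' : ℝ) :
    ((u : ℂ) - (u' : ℂ) - ε * Complex.I) ≠ 0 := by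
  intro h
  have h2 := congrArg Complex.im h
  simp at h2
  exact hε h2

lemma kernel_id {ε : ℝ} (hε : 0 < ε) (u u' : ℝ) :
    1 / ((u : ℂ) - u' - ε * Complex.I) ^ 2 - 1 / ((u' : ℂ) - u - ε * Complex.I) ^ 2
      = ((4 * ε * (u - u') / (((u - u') ^ 2 + ε ^ 2) ^ 2) : ℝ) : ℂ) * Complex.I := by
  have h1 := denom_ne_zero hε.ne' u u'
  have h2 := denom_ne_zero hε.ne' u' u
  have h3 : (((u - u') ^ 2 + ε ^ 2 : ℝ) : ℂ) ≠ 0 := by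
    exact_mod_cast (by positivity : ((u - u') ^ 2 + ε ^ 2 : ℝ) ≠ 0)
  have h3' : (((u : ℂ) - u') ^ 2 + (ε : ℂ) ^ 2) ^ 2 ≠ 0 := by
    apply pow_ne_zero; push_cast at h3; convert h3 using 2
  have hI3 : (Complex.I) ^ 3 = -Complex.I := by simp [pow_succ, Complex.I_sq]
  have hI5 : (Complex.I) ^ 5 = Complex.I := by simp [pow_succ, Complex.I_sq]
  push_cast
  field_simp
  rw [eq_div_iff h3']
  ring_nf
  simp only [Complex.I_sq, hI3, hI5, Complex.I_pow_four]
  ring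

lemma norm_denom_sq_ge {ε : ℝ} (hε : 0 < ε) (u u' : ℝ) :
    ε ^ 2 ≤ ‖((u : ℂ) - (u' : ℂ) - ε * Complex.I) ^ 2‖ := by
  rw [norm_pow]
  have him : |((u : ℂ) - (u' : ℂ) - ε * Complex.I).im| = ε := by
    simp [abs_of_pos hε]
  have h1 : ε ≤ ‖(u : ℂ) - (u' : ℂ) - ε * Complex.I‖ := by
    calc ε = |((u : ℂ) - (u' : ℂ) - ε * Complex.I).im| := him.symm
      _ ≤ ‖(u : ℂ) - (u' : ℂ) - ε * Complex.I‖ := Complex.abs_im_le_norm _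
      _ = ‖(u : ℂ) - (u' : ℂ) - ε * Complex.I‖ := rfl
  have h0 : (0:ℝ) ≤ ‖(u : ℂ) - (u' : ℂ) - ε * Complex.I‖ := norm_nonneg _
  nlinarith

/-! ### The real (Poisson-type) kernel -/

lemma P_hasDerivAt {ε : ℝ} (hε : 0 < ε) (u y : ℝ) :
    HasDerivAt (fun y => ε / ((u - y) ^ 2 + ε ^ 2))
      (2 * ε * (u - y) / (((u - y) ^ 2 + ε ^ 2) ^ 2)) y := by
  have hq : HasDerivAt (fun y : ℝ => (u - y) ^ 2 + ε ^ 2) (2 * (u - y) ^ 1 * (-1)) y := by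
    have h1 : HasDerivAt (fun y : ℝ => u - y) (-1) y := by
      simpa using (hasDerivAt_id y).const_sub u
    exact (h1.pow 2).add_const (ε ^ 2)
  have hne : (u - y) ^ 2 + ε ^ 2 ≠ 0 := by positivity
  have := (hq.inv hne).const_mul ε
  simp only [div_eq_mul_inv]
  refine this.congr_deriv ?_
  field_simp

lemma r_abs_le {ε : ℝ} (hε : 0 < ε) (x : ℝ) :
    |4 * ε * x / ((x ^ 2 + ε ^ 2) ^ 2)| ≤ 2 / ε ^ 2 := by
  have hq : (0:ℝ) < x ^ 2 + ε ^ 2 := by positivity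
  rw [abs_div, abs_of_pos (by positivity : (0:ℝ) < (x ^ 2 + ε ^ 2) ^ 2),
    div_le_div_iff₀ (by positivity) (by positivity)]
  have h1 : 2 * ε * |x| ≤ x ^ 2 + ε ^ 2 := by
    nlinarith [_root_.sq_abs x, sq_nonneg (|x| - ε), abs_nonneg x]
  have h2 : |4 * ε * x| = 4 * ε * |x| := by
    rw [abs_mul, abs_of_pos (by positivity : (0:ℝ) < 4 * ε)]
  rw [h2]
  nlinarith [abs_nonneg x, sq_nonneg ε, mul_le_mul_of_nonneg_left h1 (le_of_lt (by positivity : (0:ℝ) < ε ^ 2)),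
    mul_le_mul_of_nonneg_right h1 hq.le]

lemma P_abs_le {ε : ℝ} (hε : 0 < ε) (x : ℝ) :
    |ε / (x ^ 2 + ε ^ 2)| ≤ 1 / ε := by
  have hq : (0:ℝ) < x ^ 2 + ε ^ 2 := by positivity
  rw [abs_of_pos (by positivity), div_le_div_iff₀ hq hε]
  nlinarith [sq_nonneg x]

/-! ### Integration by parts in the inner variable -/

lemma parts (g : 𝓢(ℝ, ℝ)) {ε : ℝ} (hε : 0 < ε) (u : ℝ) :
    ∫ y : ℝ, g y * (4 * ε * (u - y) / (((u - y) ^ 2 + ε ^ 2) ^ 2))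
      = -2 * ∫ y : ℝ, deriv (g : ℝ → ℝ) y * (ε / ((u - y) ^ 2 + ε ^ 2)) := by
  have hPc : Continuous fun y : ℝ => ε / ((u - y) ^ 2 + ε ^ 2) :=
    continuous_const.div (by continuity) (fun y => by positivity)
  have hrc : Continuous fun y : ℝ => 4 * ε * (u - y) / (((u - y) ^ 2 + ε ^ 2) ^ 2) :=
    (by continuity : Continuous fun y : ℝ => 4 * ε * (u - y)).div (by continuity)
      (fun y => by positivity)
  have hterm1 : Integrable (fun y : ℝ => deriv (g : ℝ → ℝ) y * (2 * (ε / ((u - y) ^ 2 + ε ^ 2)))) := by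
    have h := (deriv_integrable g).bdd_mul
      (f := fun y => 2 * (ε / ((u - y) ^ 2 + ε ^ 2))) (c := 2 / ε) ((continuous_const.mul hPc).aestronglyMeasurable)
      (Eventually.of_forall fun y => by
        rw [Real.norm_eq_abs, abs_mul, _root_.abs_two]
        calc 2 * |ε / ((u - y) ^ 2 + ε ^ 2)| ≤ 2 * (1 / ε) :=
              mul_le_mul_of_nonneg_left (P_abs_le hε _) (by norm_num)
          _ = 2 / ε := by ring)
    apply h.congr
    exact Eventually.of_forall fun y => mul_comm _ _
  have hterm2 : Integrable (fun y : ℝ => g y * (4 * ε * (u - y) / (((u - y) ^ 2 + ε ^ 2) ^ 2))) := by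
    have h := (g.integrable (μ := volume)).bdd_mul
      (c := 2 / ε ^ 2) (hrc.aestronglyMeasurable)
      (Eventually.of_forall fun y => by
        rw [Real.norm_eq_abs]
        exact r_abs_le hε (u - y))
    apply h.congr
    exact Eventually.of_forall fun y => mul_comm _ _
  have hH : ∀ y : ℝ, HasDerivAt (fun y : ℝ => g y * (2 * (ε / ((u - y) ^ 2 + ε ^ 2))))
      (deriv (g : ℝ → ℝ) y * (2 * (ε / ((u - y) ^ 2 + ε ^ 2)))
        + g y * (4 * ε * (u - y) / (((u - y) ^ 2 + ε ^ 2) ^ 2))) y := by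
    intro y
    have h := (hasDerivAt_schwartz g y).mul ((P_hasDerivAt hε u y).const_mul 2)
    refine h.congr_deriv ?_
    ring
  have hbound : ∀ y : ℝ, ‖g y * (2 * (ε / ((u - y) ^ 2 + ε ^ 2)))‖ ≤ (2 / ε) * |g y| := by
    intro y
    rw [Real.norm_eq_abs, abs_mul, abs_mul, _root_.abs_two]
    calc |g y| * (2 * |ε / ((u - y) ^ 2 + ε ^ 2)|) ≤ |g y| * (2 * (1 / ε)) :=
          mul_le_mul_of_nonneg_left
            (mul_le_mul_of_nonneg_left (P_abs_le hε _) (by norm_num)) (abs_nonneg _)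
      _ = (2 / ε) * |g y| := by ring
  have hlim0 : Tendsto (fun y : ℝ => (2 / ε) * |g y|) atTop (𝓝 0) := by
    have := ((s_tendsto_atTop g).abs).const_mul (2 / ε)
    simpa using this
  have hlim0' : Tendsto (fun y : ℝ => (2 / ε) * |g y|) atBot (𝓝 0) := by
    have := ((s_tendsto_atBot g).abs).const_mul (2 / ε)
    simpa using this
  have htop : Tendsto (fun y : ℝ => g y * (2 * (ε / ((u - y) ^ 2 + ε ^ 2)))) atTop (𝓝 0) :=
    squeeze_zero_norm hbound hlim0
  have hbot : Tendsto (fun y : ℝ => g y * (2 * (ε / ((u - y) ^ 2 + ε ^ 2)))) atBot (𝓝 0) :=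
    squeeze_zero_norm hbound hlim0'
  have key := integral_of_hasDerivAt_of_tendsto hH (hterm1.add hterm2) hbot htop
  rw [sub_zero] at key
  rw [integral_add hterm1 hterm2] at key
  have e1 : ∫ y : ℝ, deriv (g : ℝ → ℝ) y * (2 * (ε / ((u - y) ^ 2 + ε ^ 2)))
      = 2 * ∫ y : ℝ, deriv (g : ℝ → ℝ) y * (ε / ((u - y) ^ 2 + ε ^ 2)) := by
    rw [← integral_const_mul]
    congr 1; funext y; ring
  rw [e1] at key
  linarith

/-! ### Substitution -/

lemma subst (g : 𝓢(ℝ, ℝ)) {ε : ℝ} (hε : 0 < ε) (u : ℝ) :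
    ∫ y : ℝ, deriv (g : ℝ → ℝ) y * (ε / ((u - y) ^ 2 + ε ^ 2))
      = ∫ t : ℝ, deriv (g : ℝ → ℝ) (u - ε * t) * (1 / (1 + t ^ 2)) := by
  set φ : ℝ → ℝ := fun y => deriv (g : ℝ → ℝ) y * (ε / ((u - y) ^ 2 + ε ^ 2)) with hφ
  have h1 : ∫ t : ℝ, φ (u - ε * t) = |ε⁻¹| • ∫ s : ℝ, φ (u - s) := by
    have := MeasureTheory.Measure.integral_comp_mul_left (fun s => φ (u - s)) ε
    simpa using this
  have h2 : ∫ s : ℝ, φ (u - s) = ∫ s : ℝ, φ s := by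
    have e : ∀ s : ℝ, φ (u - s) = (fun s => φ (u + s)) (-s) := by
      intro s; simp [sub_eq_add_neg]
    simp_rw [e]
    rw [integral_neg_eq_self (fun s => φ (u + s)) volume]
    exact integral_add_left_eq_self φ u
  have h3 : ∀ t : ℝ, deriv (g : ℝ → ℝ) (u - ε * t) * (1 / (1 + t ^ 2)) = ε * φ (u - ε * t) := by
    intro t
    rw [hφ]
    simp only []
    have : (u - (u - ε * t)) = ε * t := by ring
    rw [this]
    have hne : (1:ℝ) + t ^ 2 ≠ 0 := by positivity
    field_simp
    ring
  calc ∫ y : ℝ, φ y = ε * (ε⁻¹ * ∫ y : ℝ, φ y) := by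
        field_simp
    _ = ε * (|ε⁻¹| • ∫ s : ℝ, φ (u - s)) := by
        rw [h2, abs_of_pos (by positivity : (0:ℝ) < ε⁻¹), smul_eq_mul]
    _ = ε * ∫ t : ℝ, φ (u - ε * t) := by rw [h1]
    _ = ∫ t : ℝ, ε * φ (u - ε * t) := (integral_const_mul ε _).symm
    _ = ∫ t : ℝ, deriv (g : ℝ → ℝ) (u - ε * t) * (1 / (1 + t ^ 2)) := by
        congr 1; funext t; rw [h3]

/-! ### Integrability of the complex kernels -/

lemma inner_integrable1 (g : 𝓢(ℝ, ℝ)) {ε : ℝ} (hε : 0 < ε) (u : ℝ) :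
    Integrable (fun u' : ℝ => ((g u' : ℂ)) / (((u : ℂ) - u' - ε * Complex.I) ^ 2)) := by
  apply Integrable.mono' ((g.integrable (μ := volume)).norm.mul_const ((ε ^ 2)⁻¹))
  · apply Continuous.aestronglyMeasurable
    exact (Complex.continuous_ofReal.comp g.continuous).div (by continuity)
      (fun u' => pow_ne_zero 2 (denom_ne_zero hε.ne' u u'))
  · refine Eventually.of_forall fun u' => ?_
    rw [norm_div, Complex.norm_real, ← div_eq_mul_inv]
    gcongr
    exact norm_denom_sq_ge hε u u'

lemma inner_integrable2 (g : 𝓢(ℝ, ℝ)) {ε : ℝ} (hε : 0 < ε) (u : ℝ) :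
    Integrable (fun u' : ℝ => ((g u' : ℂ)) / (((u' : ℂ) - u - ε * Complex.I) ^ 2)) := by
  apply Integrable.mono' ((g.integrable (μ := volume)).norm.mul_const ((ε ^ 2)⁻¹))
  · apply Continuous.aestronglyMeasurable
    exact (Complex.continuous_ofReal.comp g.continuous).div (by continuity)
      (fun u' => pow_ne_zero 2 (denom_ne_zero hε.ne' u' u))
  · refine Eventually.of_forall fun u' => ?_
    rw [norm_div, Complex.norm_real, ← div_eq_mul_inv]
    gcongr
    exact norm_denom_sq_ge hε u' u

lemma prod_integrable1 (f g : 𝓢(ℝ, ℝ)) {ε : ℝ} (hε : 0 < ε) :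
    Integrable (fun p : ℝ × ℝ =>
      ((f p.1 : ℂ) * (g p.2 : ℂ)) / (((p.1 : ℂ) - p.2 - ε * Complex.I) ^ 2))
      ((volume : Measure ℝ).prod volume) := by
  apply Integrable.mono'
    (((f.integrable (μ := volume)).norm.mul_prod (g.integrable (μ := volume)).norm).mul_const
      ((ε ^ 2)⁻¹))
  · apply Continuous.aestronglyMeasurable
    exact ((Complex.continuous_ofReal.comp (f.continuous.comp continuous_fst)).mul
        (Complex.continuous_ofReal.comp (g.continuous.comp continuous_snd))).div
      (by continuity)
      (fun p => pow_ne_zero 2 (denom_ne_zero hε.ne' p.1 p.2))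
  · refine Eventually.of_forall fun p => ?_
    rw [norm_div, norm_mul, Complex.norm_real, Complex.norm_real, ← div_eq_mul_inv]
    gcongr
    exact norm_denom_sq_ge hε p.1 p.2

lemma prod_integrable2 (f g : 𝓢(ℝ, ℝ)) {ε : ℝ} (hε : 0 < ε) :
    Integrable (fun p : ℝ × ℝ =>
      ((f p.1 : ℂ) * (g p.2 : ℂ)) / (((p.2 : ℂ) - p.1 - ε * Complex.I) ^ 2))
      ((volume : Measure ℝ).prod volume) := by
  apply Integrable.mono'
    (((f.integrable (μ := volume)).norm.mul_prod (g.integrable (μ := volume)).norm).mul_const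
      ((ε ^ 2)⁻¹))
  · apply Continuous.aestronglyMeasurable
    exact ((Complex.continuous_ofReal.comp (f.continuous.comp continuous_fst)).mul
        (Complex.continuous_ofReal.comp (g.continuous.comp continuous_snd))).div
      (by continuity)
      (fun p => pow_ne_zero 2 (denom_ne_zero hε.ne' p.2 p.1))
  · refine Eventually.of_forall fun p => ?_
    rw [norm_div, norm_mul, Complex.norm_real, Complex.norm_real, ← div_eq_mul_inv]
    gcongr
    exact norm_denom_sq_ge hε p.2 p.1

/-! ### The main algebraic identity for fixed `ε > 0` -/

lemma main_identity (f g : 𝓢(ℝ, ℝ)) {ε : ℝ} (hε : 0 < ε) :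
    omega2Reg f g ε - omega2Reg g f ε
      = (-(1 / (Real.pi : ℂ))) *
          ((((-2 : ℝ) * ∫ u : ℝ, f u *
            ∫ t : ℝ, deriv (g : ℝ → ℝ) (u - ε * t) * (1 / (1 + t ^ 2))) : ℝ) : ℂ) *
          Complex.I := by
  have hswap : (∫ u : ℝ, ∫ u' : ℝ, ((g u : ℂ) * (f u' : ℂ)) /
        (((u : ℂ) - u' - ε * Complex.I) ^ 2))
      = ∫ u : ℝ, ∫ u' : ℝ, ((f u : ℂ) * (g u' : ℂ)) /
        (((u' : ℂ) - u - ε * Complex.I) ^ 2) := by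
    rw [integral_integral_swap (f := fun u u' : ℝ => ((g u : ℂ) * (f u' : ℂ)) /
      (((u : ℂ) - u' - ε * Complex.I) ^ 2))
      (by exact prod_integrable1 g f hε)]
    congr 1; funext a; congr 1; funext b; ring
  have hA : Integrable (fun u : ℝ => ∫ u' : ℝ, ((f u : ℂ) * (g u' : ℂ)) /
      (((u : ℂ) - u' - ε * Complex.I) ^ 2)) :=
    (prod_integrable1 f g hε).integral_prod_left
  have hB : Integrable (fun u : ℝ => ∫ u' : ℝ, ((f u : ℂ) * (g u' : ℂ)) /
      (((u' : ℂ) - u - ε * Complex.I) ^ 2)) :=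
    (prod_integrable2 f g hε).integral_prod_left
  have inner_eq : ∀ u : ℝ,
      ((∫ u' : ℝ, ((f u : ℂ) * (g u' : ℂ)) / (((u : ℂ) - u' - ε * Complex.I) ^ 2))
        - ∫ u' : ℝ, ((f u : ℂ) * (g u' : ℂ)) / (((u' : ℂ) - u - ε * Complex.I) ^ 2))
      = ((∫ u' : ℝ, f u * g u' * (4 * ε * (u - u') / (((u - u') ^ 2 + ε ^ 2) ^ 2)) : ℝ) : ℂ)
          * Complex.I := by
    intro u
    have a1 : (∫ u' : ℝ, ((f u : ℂ) * (g u' : ℂ)) / (((u : ℂ) - u' - ε * Complex.I) ^ 2))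
        = ∫ u' : ℝ, (f u : ℂ) * ((g u' : ℂ) / (((u : ℂ) - u' - ε * Complex.I) ^ 2)) := by
      congr 1; funext u'; rw [mul_div_assoc]
    have a2 : (∫ u' : ℝ, ((f u : ℂ) * (g u' : ℂ)) / (((u' : ℂ) - u - ε * Complex.I) ^ 2))
        = ∫ u' : ℝ, (f u : ℂ) * ((g u' : ℂ) / (((u' : ℂ) - u - ε * Complex.I) ^ 2)) := by
      congr 1; funext u'; rw [mul_div_assoc]
    rw [a1, a2, ← integral_sub ((inner_integrable1 g hε u).const_mul (f u : ℂ))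
      ((inner_integrable2 g hε u).const_mul (f u : ℂ))]
    have hpt : ∀ u' : ℝ,
        (f u : ℂ) * ((g u' : ℂ) / (((u : ℂ) - u' - ε * Complex.I) ^ 2))
          - (f u : ℂ) * ((g u' : ℂ) / (((u' : ℂ) - u - ε * Complex.I) ^ 2))
        = ((f u * g u' * (4 * ε * (u - u') / (((u - u') ^ 2 + ε ^ 2) ^ 2)) : ℝ) : ℂ)
            * Complex.I := by
      intro u'
      have hk := kernel_id hε u u'
      calc (f u : ℂ) * ((g u' : ℂ) / (((u : ℂ) - u' - ε * Complex.I) ^ 2))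
            - (f u : ℂ) * ((g u' : ℂ) / (((u' : ℂ) - u - ε * Complex.I) ^ 2))
          = ((f u : ℂ) * (g u' : ℂ)) *
              (1 / (((u : ℂ) - u' - ε * Complex.I) ^ 2)
                - 1 / (((u' : ℂ) - u - ε * Complex.I) ^ 2)) := by ring
        _ = ((f u : ℂ) * (g u' : ℂ)) *
              (((4 * ε * (u - u') / (((u - u') ^ 2 + ε ^ 2) ^ 2) : ℝ) : ℂ) * Complex.I) := by
            rw [hk]
        _ = ((f u * g u' * (4 * ε * (u - u') / (((u - u') ^ 2 + ε ^ 2) ^ 2)) : ℝ) : ℂ)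
              * Complex.I := by push_cast; ring
    have hofr : (∫ u' : ℝ, (((f u * g u' *
          (4 * ε * (u - u') / (((u - u') ^ 2 + ε ^ 2) ^ 2)) : ℝ)) : ℂ))
        = (((∫ u' : ℝ, f u * g u' *
          (4 * ε * (u - u') / (((u - u') ^ 2 + ε ^ 2) ^ 2)) : ℝ)) : ℂ) :=
      integral_ofReal
    rw [integral_congr_ae (Eventually.of_forall hpt), integral_mul_const, hofr]
  have step5 : ∀ u : ℝ,
      (∫ u' : ℝ, f u * g u' * (4 * ε * (u - u') / (((u - u') ^ 2 + ε ^ 2) ^ 2)))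
        = f u * ((-2 : ℝ) * ∫ t : ℝ, deriv (g : ℝ → ℝ) (u - ε * t) * (1 / (1 + t ^ 2))) := by
    intro u
    have e1 : (∫ u' : ℝ, f u * g u' * (4 * ε * (u - u') / (((u - u') ^ 2 + ε ^ 2) ^ 2)))
        = f u * ∫ u' : ℝ, g u' * (4 * ε * (u - u') / (((u - u') ^ 2 + ε ^ 2) ^ 2)) := by
      rw [← integral_const_mul]
      congr 1; funext u'; ring
    rw [e1, parts g hε u, subst g hε u]
  unfold omega2Reg
  rw [show (-(1 / (Real.pi : ℂ))) *
        (∫ u : ℝ, ∫ u' : ℝ, ((f u : ℂ) * (g u' : ℂ)) / (((u : ℂ) - u' - ε * Complex.I) ^ 2))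
      - (-(1 / (Real.pi : ℂ))) *
        (∫ u : ℝ, ∫ u' : ℝ, ((g u : ℂ) * (f u' : ℂ)) / (((u : ℂ) - u' - ε * Complex.I) ^ 2))
      = (-(1 / (Real.pi : ℂ))) *
        ((∫ u : ℝ, ∫ u' : ℝ, ((f u : ℂ) * (g u' : ℂ)) / (((u : ℂ) - u' - ε * Complex.I) ^ 2))
          - (∫ u : ℝ, ∫ u' : ℝ, ((g u : ℂ) * (f u' : ℂ)) /
              (((u : ℂ) - u' - ε * Complex.I) ^ 2))) from by ring]
  rw [hswap, ← integral_sub hA hB,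
    integral_congr_ae (Eventually.of_forall inner_eq), integral_mul_const]
  have hco : (∫ u : ℝ, ((∫ u' : ℝ, f u * g u' *
        (4 * ε * (u - u') / (((u - u') ^ 2 + ε ^ 2) ^ 2)) : ℝ) : ℂ))
      = ((∫ u : ℝ, ∫ u' : ℝ, f u * g u' *
        (4 * ε * (u - u') / (((u - u') ^ 2 + ε ^ 2) ^ 2)) : ℝ) : ℂ) := integral_ofReal (𝕜 := ℂ)
  rw [hco, integral_congr_ae (Eventually.of_forall step5)]
  have e2 : (∫ u : ℝ, f u * ((-2 : ℝ) *
        ∫ t : ℝ, deriv (g : ℝ → ℝ) (u - ε * t) * (1 / (1 + t ^ 2))))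
      = (-2 : ℝ) * ∫ u : ℝ, f u *
        ∫ t : ℝ, deriv (g : ℝ → ℝ) (u - ε * t) * (1 / (1 + t ^ 2)) := by
    rw [← integral_const_mul]
    congr 1; funext u; ring
  rw [e2]
  ring

/-! ### The limit `ε → 0⁺` -/

/-- The inner (substituted) integral. -/
def Qfun (g : 𝓢(ℝ, ℝ)) (ε u : ℝ) : ℝ :=
  ∫ t : ℝ, deriv (g : ℝ → ℝ) (u - ε * t) * (1 / (1 + t ^ 2))

lemma F_bound (g : 𝓢(ℝ, ℝ)) (ε u t : ℝ) :
    ‖deriv (g : ℝ → ℝ) (u - ε * t) * (1 / (1 + t ^ 2))‖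
      ≤ bnd (SchwartzMap.derivCLM ℝ ℝ g) * (1 + t ^ 2)⁻¹ := by
  rw [Real.norm_eq_abs, abs_mul, one_div, abs_of_pos (by positivity : (0:ℝ) < (1 + t ^ 2)⁻¹)]
  exact mul_le_mul_of_nonneg_right (deriv_abs_le g _) (by positivity)

lemma bound_integrable (g : 𝓢(ℝ, ℝ)) :
    Integrable (fun t : ℝ => bnd (SchwartzMap.derivCLM ℝ ℝ g) * (1 + t ^ 2)⁻¹) :=
  integrable_inv_one_add_sq.const_mul _

lemma F_cont (g : 𝓢(ℝ, ℝ)) (ε t : ℝ) :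
    Continuous fun u : ℝ => deriv (g : ℝ → ℝ) (u - ε * t) * (1 / (1 + t ^ 2)) := by
  have hc : Continuous fun u : ℝ => u - ε * t := by continuity
  exact ((deriv_continuous g).comp hc).mul continuous_const

lemma F_meas (g : 𝓢(ℝ, ℝ)) (ε u : ℝ) :
    AEStronglyMeasurable (fun t : ℝ => deriv (g : ℝ → ℝ) (u - ε * t) * (1 / (1 + t ^ 2)))
      volume := by
  have hc : Continuous fun t : ℝ => u - ε * t := by continuity
  have hc2 : Continuous fun t : ℝ => 1 / (1 + t ^ 2) :=
    continuous_const.div (by continuity) (fun t => by positivity)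
  exact (((deriv_continuous g).comp hc).mul hc2).aestronglyMeasurable

lemma Q_cont (g : 𝓢(ℝ, ℝ)) (ε : ℝ) : Continuous fun u : ℝ => Qfun g ε u := by
  apply continuous_of_dominated (bound := fun t : ℝ => bnd (SchwartzMap.derivCLM ℝ ℝ g) * (1 + t ^ 2)⁻¹)
  · exact fun u => F_meas g ε u
  · exact fun u => Eventually.of_forall fun t => F_bound g ε u t
  · exact bound_integrable g
  · exact Eventually.of_forall fun t => F_cont g ε t

lemma Q_abs_le (g : 𝓢(ℝ, ℝ)) (ε u : ℝ) :
    |Qfun g ε u| ≤ bnd (SchwartzMap.derivCLM ℝ ℝ g) * Real.pi := by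
  have h := norm_integral_le_of_norm_le (bound_integrable g)
    (Eventually.of_forall fun t => F_bound g ε u t)
  rw [Real.norm_eq_abs] at h
  calc |Qfun g ε u| ≤ ∫ t : ℝ, bnd (SchwartzMap.derivCLM ℝ ℝ g) * (1 + t ^ 2)⁻¹ := h
    _ = bnd (SchwartzMap.derivCLM ℝ ℝ g) * Real.pi := by
        rw [integral_const_mul, integral_univ_inv_one_add_sq]

lemma Q_tendsto (g : 𝓢(ℝ, ℝ)) (u : ℝ) :
    Tendsto (fun ε : ℝ => Qfun g ε u) (𝓝[>] (0:ℝ))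
      (𝓝 (deriv (g : ℝ → ℝ) u * Real.pi)) := by
  have h := tendsto_integral_filter_of_dominated_convergence
    (μ := volume) (l := 𝓝[>] (0:ℝ))
    (F := fun ε : ℝ => fun t : ℝ => deriv (g : ℝ → ℝ) (u - ε * t) * (1 / (1 + t ^ 2)))
    (f := fun t : ℝ => deriv (g : ℝ → ℝ) u * (1 / (1 + t ^ 2)))
    (fun t : ℝ => bnd (SchwartzMap.derivCLM ℝ ℝ g) * (1 + t ^ 2)⁻¹)
    (Eventually.of_forall fun ε => F_meas g ε u)
    (Eventually.of_forall fun ε => Eventually.of_forall fun t => F_bound g ε u t)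
    (bound_integrable g)
    (Eventually.of_forall fun t => by
      have hc0 : Continuous fun ε : ℝ => u - ε * t := by continuity
      have hc : Continuous fun ε : ℝ => deriv (g : ℝ → ℝ) (u - ε * t) :=
        (deriv_continuous g).comp hc0
      have := (hc.tendsto 0).mono_left (nhdsWithin_le_nhds (s := Set.Ioi (0:ℝ)))
      simp only [zero_mul, sub_zero] at this
      exact this.mul_const _)
  have hval : (∫ t : ℝ, deriv (g : ℝ → ℝ) u * (1 / (1 + t ^ 2)))
      = deriv (g : ℝ → ℝ) u * Real.pi := by
    simp_rw [one_div]
    rw [integral_const_mul, integral_univ_inv_one_add_sq]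
  rw [hval] at h
  exact h

lemma S_tendsto (f g : 𝓢(ℝ, ℝ)) :
    Tendsto (fun ε : ℝ => ∫ u : ℝ, f u * Qfun g ε u) (𝓝[>] (0:ℝ))
      (𝓝 (Real.pi * ∫ u : ℝ, f u * deriv (g : ℝ → ℝ) u)) := by
  have h := tendsto_integral_filter_of_dominated_convergence
    (μ := volume) (l := 𝓝[>] (0:ℝ))
    (F := fun ε : ℝ => fun u : ℝ => f u * Qfun g ε u)
    (f := fun u : ℝ => f u * (deriv (g : ℝ → ℝ) u * Real.pi))
    (fun u : ℝ => |f u| * (bnd (SchwartzMap.derivCLM ℝ ℝ g) * Real.pi))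
    (Eventually.of_forall fun ε =>
      (f.continuous.mul (Q_cont g ε)).aestronglyMeasurable)
    (Eventually.of_forall fun ε => Eventually.of_forall fun u => by
      rw [Real.norm_eq_abs, abs_mul]
      exact mul_le_mul_of_nonneg_left (Q_abs_le g ε u) (abs_nonneg _))
    (by
      have : Integrable (fun u : ℝ => |f u|) := (f.integrable (μ := volume)).norm
      exact this.mul_const _)
    (Eventually.of_forall fun u => (Q_tendsto g u).const_mul _)
  have hval : (∫ u : ℝ, f u * (deriv (g : ℝ → ℝ) u * Real.pi))
      = Real.pi * ∫ u : ℝ, f u * deriv (g : ℝ → ℝ) u := by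
    rw [← integral_const_mul]
    congr 1; funext u; ring
  rw [hval] at h
  exact h

/-! ### The symplectic form -/

lemma sigma_eq (f g : 𝓢(ℝ, ℝ)) :
    sigmaLine f g = 2 * ∫ u : ℝ, f u * deriv (g : ℝ → ℝ) u := by
  have hfg' : Integrable (fun u : ℝ => f u * deriv (g : ℝ → ℝ) u) :=
    (deriv_integrable g).bdd_mul (c := bnd f) f.continuous.aestronglyMeasurable
      (Eventually.of_forall fun x => by rw [Real.norm_eq_abs]; exact abs_le_bnd f x)
  have hgf' : Integrable (fun u : ℝ => g u * deriv (f : ℝ → ℝ) u) :=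
    (deriv_integrable f).bdd_mul (c := bnd g) g.continuous.aestronglyMeasurable
      (Eventually.of_forall fun x => by rw [Real.norm_eq_abs]; exact abs_le_bnd g x)
  have hf'g : Integrable (fun u : ℝ => deriv (f : ℝ → ℝ) u * g u) :=
    hgf'.congr (Eventually.of_forall fun u => mul_comm _ _)
  have hprod : ∀ x : ℝ, HasDerivAt (fun y : ℝ => f y * g y)
      (deriv (f : ℝ → ℝ) x * g x + f x * deriv (g : ℝ → ℝ) x) x :=
    fun x => (hasDerivAt_schwartz f x).mul (hasDerivAt_schwartz g x)
  have htop : Tendsto (fun y : ℝ => f y * g y) atTop (𝓝 0) := by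
    simpa using (s_tendsto_atTop f).mul (s_tendsto_atTop g)
  have hbot : Tendsto (fun y : ℝ => f y * g y) atBot (𝓝 0) := by
    simpa using (s_tendsto_atBot f).mul (s_tendsto_atBot g)
  have key := integral_of_hasDerivAt_of_tendsto hprod (hf'g.add hfg') hbot htop
  rw [sub_zero, integral_add hf'g hfg'] at key
  have hcomm : (∫ u : ℝ, g u * deriv (f : ℝ → ℝ) u)
      = ∫ u : ℝ, deriv (f : ℝ → ℝ) u * g u :=
    integral_congr_ae (Eventually.of_forall fun u => mul_comm _ _)
  unfold sigmaLine
  rw [integral_sub hfg' hgf', hcomm]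
  linarith

end Stmt14

open Stmt14 in
/-- the antisymmetric part of the boundary two-point function reproduces the
symplectic form: `ω₂(f,g) − ω₂(g,f) = i σ(f,g)` for real Schwartz `f, g`. -/
theorem stmt_14 (f g : 𝓢(ℝ, ℝ)) :
    Tendsto (fun ε : ℝ => omega2Reg f g ε - omega2Reg g f ε) (nhdsWithin 0 (Set.Ioi 0))
      (nhds (Complex.I * (sigmaLine f g : ℂ))) := by
  have hS := S_tendsto f g
  have hcont : Continuous fun x : ℝ =>
      (-(1 / (Real.pi : ℂ))) * (((-2 : ℝ) * x : ℝ) : ℂ) * Complex.I := by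
    apply Continuous.mul _ continuous_const
    exact continuous_const.mul (Complex.continuous_ofReal.comp (by continuity))
  have h2 := (hcont.tendsto _).comp hS
  have hval : (-(1 / (Real.pi : ℂ))) *
      ((((-2 : ℝ) * (Real.pi * ∫ u : ℝ, f u * deriv (g : ℝ → ℝ) u) : ℝ)) : ℂ) * Complex.I
      = Complex.I * (sigmaLine f g : ℂ) := by
    rw [sigma_eq f g]
    have hπ : (Real.pi : ℂ) ≠ 0 := by exact_mod_cast Real.pi_ne_zero
    push_cast
    field_simp
  rw [hval] at h2
  apply h2.congr'
  filter_upwards [self_mem_nhdsWithin] with ε hε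
  exact (main_identity f g hε).symm
end
end
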